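/- arXiv:1810.08277 — 5 statements merged into one kernel-verified Lean document; each statement's English description precedes it below -/
import Mathlib

section
/- Let x be an odd positive integer coprime to an odd positive integer N, let r be the multiplicative order of x modulo N, and suppose r is even and x^{r/2} + 1 ≢ 0 (mod N). Then gcd(x^{r/2}+1, N) and gcd(x^{r/2}-1, N) are both nontrivial divisors of N (i.e., strictly between 1 and N). -/
/-- Shor's classical reduction: if `x` is odd, coprime to odd `N > 1`, `r` is
the multiplicative order of `x` modulo `N`, `r` is even, and
`x^(r/2) + 1 ≢ 0 (mod N)`, then `gcd(x^(r/2)+1, N)` and `gcd(x^(r/2)-1, N)`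
are nontrivial divisors of `N`. -/
theorem shor_gcd_nontrivial (N x r : ℕ) (hN : 1 < N) (hNodd : Odd N)
    (hxpos : 0 < x) (hxodd : Odd x) (hcop : Nat.Coprime x N)
    (hrpos : 0 < r) (hord : x ^ r ≡ 1 [MOD N])
    (hmin : ∀ s, 0 < s → x ^ s ≡ 1 [MOD N] → r ≤ s)
    (hreven : 2 ∣ r) (hne : ¬ N ∣ x ^ (r / 2) + 1) :
    (1 < Nat.gcd (x ^ (r / 2) + 1) N ∧ Nat.gcd (x ^ (r / 2) + 1) N < N) ∧
    (1 < Nat.gcd (x ^ (r / 2) - 1) N ∧ Nat.gcd (x ^ (r / 2) - 1) N < N) := by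
  set m := r / 2 with hm
  have hr2 : 2 ≤ r := Nat.le_of_dvd hrpos hreven
  have hmpos : 0 < m := Nat.div_pos hr2 (by norm_num)
  have hmlt : m < r := Nat.div_lt_self hrpos (by norm_num)
  have hxm1 : 1 ≤ x ^ m := Nat.one_le_pow _ _ hxpos
  have hxr1 : 1 ≤ x ^ r := Nat.one_le_pow _ _ hxpos
  -- N divides x^r - 1
  have hdvd : N ∣ x ^ r - 1 := (Nat.modEq_iff_dvd' hxr1).mp hord.symm
  -- factorization
  have hfac : (x ^ m - 1) * (x ^ m + 1) = x ^ r - 1 := by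
    have h2m : m * 2 = r := Nat.div_mul_cancel hreven
    zify [hxm1, hxr1]
    rw [← h2m]
    ring
  have hkey : N ∣ (x ^ m - 1) * (x ^ m + 1) := hfac ▸ hdvd
  -- N does not divide x^m - 1
  have hnd1 : ¬ N ∣ x ^ m - 1 := by
    intro h
    have : x ^ m ≡ 1 [MOD N] := ((Nat.modEq_iff_dvd' hxm1).mpr h).symm
    exact absurd (hmin m hmpos this) (Nat.not_le.mpr hmlt)
  have hNpos : 0 < N := Nat.lt_trans Nat.zero_lt_one hN
  constructor
  · constructor
    · rcases Nat.lt_or_ge 1 (Nat.gcd (x ^ m + 1) N) with h | h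
      · exact h
      · exfalso
        interval_cases hg : Nat.gcd (x ^ m + 1) N
        · exact absurd (Nat.eq_zero_of_gcd_eq_zero_right hg) hNpos.ne'
        · have hcop' : Nat.Coprime N (x ^ m + 1) := Nat.Coprime.symm hg
          exact hnd1 (hcop'.dvd_of_dvd_mul_right hkey)
    · have hle : Nat.gcd (x ^ m + 1) N ≤ N := Nat.le_of_dvd hNpos (Nat.gcd_dvd_right _ _)
      rcases Nat.lt_or_eq_of_le hle with h | h
      · exact h
      · exact absurd (h ▸ Nat.gcd_dvd_left (x ^ m + 1) N) hne
  · constructor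
    · rcases Nat.lt_or_ge 1 (Nat.gcd (x ^ m - 1) N) with h | h
      · exact h
      · exfalso
        interval_cases hg : Nat.gcd (x ^ m - 1) N
        · exact absurd (Nat.eq_zero_of_gcd_eq_zero_right hg) hNpos.ne'
        · have hcop' : Nat.Coprime N (x ^ m - 1) := Nat.Coprime.symm hg
          exact hne (hcop'.dvd_of_dvd_mul_left hkey)
    · have hle : Nat.gcd (x ^ m - 1) N ≤ N := Nat.le_of_dvd hNpos (Nat.gcd_dvd_right _ _)
      rcases Nat.lt_or_eq_of_le hle with h | h
      · exact h
      · exact absurd (h ▸ Nat.gcd_dvd_left (x ^ m - 1) N) hnd1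
end

section
/- Let N be odd with k distinct prime factors, and choose x uniformly at random from the units modulo N. Let r = ord_N(x). Then the probability that r is even and x^{r/2} + 1 ≢ 0 (mod N) is at least 1 - 1/2^{k-1}. -/
/-!
By the Chinese remainder theorem `(ZMod N)ˣ ≃* ∏ p, (ZMod (p ^ α_p))ˣ`. If `x` is bad (its order
`r` is odd, or `x ^ (r / 2) = -1`), then every component `x_p` has an order with the same 2-adic
valuation as `r`: it divides `r`, but not `r / 2` since `x_p ^ (r / 2) = -1 ≠ 1`. Each factor
`(ZMod (p ^ α))ˣ` is cyclic of even order `n`, and the elements whose order has a prescribed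
2-adic valuation lie either inside or outside the index-2 subgroup `{y | y ^ (n / 2) = 1}`, so
they form at most half of the factor. Once one component is chosen, each of the remaining `k - 1`
components is confined to at most half of its factor, so at most `φ(N) / 2 ^ (k - 1)` units are bad.
-/

open Finset

namespace Nat

theorem factorization_eq_of_dvd_of_not_mul_dvd {a b p : ℕ} (hab : a ∣ b) (hb : b ≠ 0)
    (h : ¬p * a ∣ b) : b.factorization p = a.factorization p := by
  obtain ⟨c, rfl⟩ := hab
  have hc : ¬p ∣ c := fun ⟨d, hd⟩ => h ⟨d, by rw [hd]; ring⟩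
  rw [factorization_mul (left_ne_zero_of_mul hb) (right_ne_zero_of_mul hb), Finsupp.add_apply,
    factorization_eq_zero_of_not_dvd hc, add_zero]

theorem mul_dvd_iff_factorization_lt {a b p : ℕ} (hp : p.Prime) (hab : a ∣ b) (hb : b ≠ 0) :
    p * a ∣ b ↔ a.factorization p < b.factorization p := by
  refine ⟨fun h => ?_, fun h => by_contra fun h' => ?_⟩
  · have ha : a ≠ 0 := ne_zero_of_dvd_ne_zero hb hab
    have := (factorization_le_iff_dvd (mul_ne_zero hp.ne_zero ha) hb).2 h p
    rw [factorization_mul hp.ne_zero ha, Finsupp.add_apply, hp.factorization_self] at this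
    omega
  · exact h.ne (factorization_eq_of_dvd_of_not_mul_dvd hab hb h').symm

theorem two_lt_pow_of_prime_of_ne_two {p e : ℕ} (hp : p.Prime) (hp2 : p ≠ 2) (he : e ≠ 0) :
    2 < p ^ e :=
  (lt_of_le_of_ne hp.two_le hp2.symm).trans_le (le_self_pow he p)

end Nat

theorem pow_natCard_div_two_eq_one_iff {G : Type*} [Group G] [Finite G] (h2 : 2 ∣ Nat.card G)
    (y : G) : y ^ (Nat.card G / 2) = 1 ↔
      (orderOf y).factorization 2 < (Nat.card G).factorization 2 := by
  rw [← orderOf_dvd_iff_pow_eq_one, Nat.dvd_div_iff_mul_dvd h2,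
    Nat.mul_dvd_iff_factorization_lt Nat.prime_two (orderOf_dvd_natCard y) Nat.card_pos.ne']

theorem IsCyclic.two_mul_ncard_factorization_orderOf_eq_le {G : Type*} [CommGroup G]
    [IsCyclic G] [Finite G] (h2 : 2 ∣ Nat.card G) (j : ℕ) :
    2 * {y : G | (orderOf y).factorization 2 = j}.ncard ≤ Nat.card G := by
  set H := (powMonoidHom (Nat.card G / 2) : G →* G).ker
  have hH : (H : Set G).ncard = Nat.card G / 2 := by
    rw [← Nat.card_coe_set_eq]
    exact (IsCyclic.card_powMonoidHom_ker (G := G) _).trans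
      (Nat.gcd_eq_right (Nat.div_dvd_of_dvd h2))
  have hmem (y : G) : y ∈ H ↔ (orderOf y).factorization 2 < (Nat.card G).factorization 2 :=
    pow_natCard_div_two_eq_one_iff h2 y
  rcases lt_or_ge j ((Nat.card G).factorization 2) with hj | hj
  · have hsub : {y : G | (orderOf y).factorization 2 = j} ⊆ H :=
      fun y hy => (hmem y).2 (hy ▸ hj)
    have := Set.ncard_le_ncard hsub
    omega
  · have hsub : {y : G | (orderOf y).factorization 2 = j} ⊆ (H : Set G)ᶜ :=
      fun y hy hyH => ((hmem y).1 hyH).not_ge (hy ▸ hj)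
    have := Set.ncard_le_ncard hsub
    have := Set.ncard_add_ncard_compl (H : Set G)
    omega

theorem ZMod.two_mul_ncard_factorization_orderOf_units_eq_le {p e : ℕ} (hp : p.Prime)
    (hp2 : p ≠ 2) (he : e ≠ 0) (j : ℕ) :
    2 * {y : (ZMod (p ^ e))ˣ | (orderOf y).factorization 2 = j}.ncard ≤
      Nat.card (ZMod (p ^ e))ˣ := by
  have := isCyclic_units_of_prime_pow p hp hp2 e
  have hpe := Nat.two_lt_pow_of_prime_of_ne_two hp hp2 he
  have : NeZero (p ^ e) := ⟨by omega⟩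
  refine IsCyclic.two_mul_ncard_factorization_orderOf_eq_le ?_ j
  rw [Nat.card_eq_fintype_card, card_units_eq_totient]
  exact (Nat.totient_even hpe).two_dvd

theorem factorization_orderOf_map_units_eq {R S : Type*} [Ring R] [Ring S] (f : R →+* S)
    (hS : (-1 : S) ≠ 1) {x : Rˣ} (hx : IsOfFinOrder x)
    (hbad : 2 ∣ orderOf x → (x : R) ^ (orderOf x / 2) = -1) :
    (orderOf (Units.map (f : R →* S) x)).factorization 2 = (orderOf x).factorization 2 := by
  refine (Nat.factorization_eq_of_dvd_of_not_mul_dvd (orderOf_map_dvd _ x)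
    hx.orderOf_pos.ne' fun h => hS ?_).symm
  have h2 : 2 ∣ orderOf x := dvd_of_mul_right_dvd h
  have h1 := orderOf_dvd_iff_pow_eq_one.1 ((Nat.dvd_div_iff_mul_dvd h2).2 h)
  have := congrArg Units.val h1
  rwa [Units.val_pow_eq_pow_val, Units.coe_map, MonoidHom.coe_coe, ← map_pow, hbad h2, map_neg,
    map_one, Units.val_one] at this

theorem ncard_setOf_forall_apply_eq_le {ι : Type*} [Fintype ι] {α : ι → Type*}
    [∀ i, Finite (α i)] {β : Type*} (f : ∀ i, α i → β)
    (hf : ∀ i b, 2 * {a | f i a = b}.ncard ≤ Nat.card (α i)) (i₀ : ι) :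
    2 ^ (Fintype.card ι - 1) * {x : ∀ i, α i | ∀ i, f i (x i) = f i₀ (x i₀)}.ncard ≤
      Nat.card (∀ i, α i) := by
  classical
  have := fun i => Fintype.ofFinite (α i)
  simp only [Set.ncard_eq_toFinset_card', Nat.card_eq_fintype_card, Set.toFinset_ofPred]
    at hf ⊢
  set c : ∀ i, β → ℕ := fun i b => #{a | f i a = b}
  have hS : #{x : ∀ i, α i | ∀ i, f i (x i) = f i₀ (x i₀)} =
      ∑ b ∈ univ.image (f i₀), ∏ i, c i b := by
    rw [card_eq_sum_card_fiberwise (f := fun x => f i₀ (x i₀)) fun x _ => mem_image_of_mem _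
      (mem_univ _)]
    refine sum_congr rfl fun b _ => ?_
    rw [← Fintype.card_piFinset]
    congr 1
    ext x
    simp only [mem_filter, mem_univ, true_and, Fintype.mem_piFinset]
    exact ⟨fun ⟨hx, hb⟩ i => (hx i).trans hb,
      fun hx => ⟨fun i => (hx i).trans (hx i₀).symm, hx i₀⟩⟩
  have hb (b : β) : 2 ^ (Fintype.card ι - 1) * ∏ i, c i b ≤
      c i₀ b * ∏ i ∈ univ.erase i₀, Fintype.card (α i) := by
    have hk : Fintype.card ι - 1 = #(univ.erase i₀) := by
      rw [card_erase_of_mem (mem_univ i₀), card_univ]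
    calc 2 ^ (Fintype.card ι - 1) * ∏ i, c i b
        = c i₀ b * ∏ i ∈ univ.erase i₀, 2 * c i b := by
          rw [← mul_prod_erase univ _ (mem_univ i₀), prod_mul_distrib, prod_const, hk]; ring
      _ ≤ c i₀ b * ∏ i ∈ univ.erase i₀, Fintype.card (α i) := by
          gcongr with i; exact hf i b
  calc 2 ^ (Fintype.card ι - 1) * #{x : ∀ i, α i | ∀ i, f i (x i) = f i₀ (x i₀)}
      = ∑ b ∈ univ.image (f i₀), 2 ^ (Fintype.card ι - 1) * ∏ i, c i b := by rw [hS, mul_sum]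
    _ ≤ ∑ b ∈ univ.image (f i₀), c i₀ b * ∏ i ∈ univ.erase i₀, Fintype.card (α i) :=
      sum_le_sum fun b _ => hb b
    _ = Fintype.card (α i₀) * ∏ i ∈ univ.erase i₀, Fintype.card (α i) := by
      rw [← sum_mul, card_univ.symm.trans (card_eq_sum_card_image (f i₀) univ)]
    _ = Fintype.card (∀ i, α i) := by
      rw [Fintype.card_pi, ← mul_prod_erase univ _ (mem_univ i₀)]

theorem one_sub_one_div_le_div_of_add_eq {a b n c : ℝ} (habn : a + b = n) (hb : c * b ≤ n)
    (hc : 0 < c) (hn : 0 < n) : 1 - 1 / c ≤ a / n := by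
  have : b ≤ n / c := by rw [le_div_iff₀ hc]; linarith
  rw [le_div_iff₀ hn, sub_mul, one_div_mul_eq_div]
  linarith

/-- For odd `N > 1` with `k` distinct prime factors, the proportion of units
`x` modulo `N` whose multiplicative order `r` is even and satisfies
`x^(r/2) ≢ -1 (mod N)` is at least `1 - 1/2^(k-1)`. -/
theorem shor_good_x_probability (N : ℕ) (hN : 1 < N) (hodd : Odd N) :
    (1 : ℝ) - 1 / 2 ^ (N.primeFactors.card - 1) ≤
      ({x : (ZMod N)ˣ | 2 ∣ orderOf x ∧
          (x : ZMod N) ^ (orderOf x / 2) ≠ -1}.ncard : ℝ) /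
        (Nat.card (ZMod N)ˣ : ℝ) := by
  set good := {x : (ZMod N)ˣ | 2 ∣ orderOf x ∧ (x : ZMod N) ^ (orderOf x / 2) ≠ -1}
  have hfactor (p : N.primeFactors) : (p : ℕ).Prime ∧ (p : ℕ) ≠ 2 ∧ N.factorization p ≠ 0 :=
    ⟨Nat.prime_of_mem_primeFactors p.2,
      hodd.ne_two_of_dvd_nat (Nat.dvd_of_mem_primeFactors p.2), Finsupp.mem_support_iff.1 p.2⟩
  let e := ZMod.equivPi (n := N) hodd.pos.ne'
  let E := (Units.mapEquiv e.toMulEquiv).trans MulEquiv.piUnits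
  obtain ⟨p₀⟩ := (Nat.nonempty_primeFactors.2 hN).to_subtype
  have hbad : E '' goodᶜ ⊆
      {y | ∀ p, (orderOf (y p)).factorization 2 = (orderOf (y p₀)).factorization 2} := by
    rintro _ ⟨x, hx, rfl⟩ p
    -- `E x p` is definitionally the reduction of `x` modulo `p ^ N.factorization p`
    have hcomponent (p : N.primeFactors) :
        (orderOf (E x p)).factorization 2 = (orderOf x).factorization 2 :=
      have := Fact.mk (Nat.two_lt_pow_of_prime_of_ne_two (hfactor p).1 (hfactor p).2.1
        (hfactor p).2.2)
      factorization_orderOf_map_units_eq ((Pi.evalRingHom _ p).comp e.toRingHom)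
        ZMod.neg_one_ne_one (isOfFinOrder_of_finite x) (by simpa [good, not_and] using hx)
    rw [hcomponent p, hcomponent p₀]
  have hcount := ncard_setOf_forall_apply_eq_le (fun _ y => (orderOf y).factorization 2)
    (fun p => ZMod.two_mul_ncard_factorization_orderOf_units_eq_le (hfactor p).1
      (hfactor p).2.1 (hfactor p).2.2) p₀
  rw [Nat.card_congr E.toEquiv.symm, Fintype.card_coe] at hcount
  refine one_sub_one_div_le_div_of_add_eq (b := goodᶜ.ncard)
    (by exact_mod_cast Set.ncard_add_ncard_compl good) ?_ (by positivity)
    (by exact_mod_cast Nat.card_pos)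
  rw [← Set.ncard_image_of_injective goodᶜ E.injective]
  exact_mod_cast (Nat.mul_le_mul_left _ (Set.ncard_le_ncard hbad)).trans hcount
end

section
/- Define sequences α, β by α₁ = β₁ = 1/√(2ⁿ) and α_{k+1} = ((2^{n-1}-1)/2^{n-1})·α_k + ((2ⁿ-1)/2^{n-1})·β_k, β_{k+1} = -(1/2^{n-1})·α_k + ((2^{n-1}-1)/2^{n-1})·β_k. If θ satisfies sin²θ = 1/2ⁿ (with 0 < θ < π/2), then for all j ≥ 1, α_j = sin((2j-1)θ) and β_j = (1/√(2ⁿ-1))·cos((2j-1)θ). -/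
open Real

/-!
With `sin²θ = 1/2ⁿ` the Grover coefficients become trigonometric:
`(2ⁿ⁻¹ - 1)/2ⁿ⁻¹ = cos 2θ`, `1/2ⁿ⁻¹ = 2 sin²θ`, `(2ⁿ - 1)/2ⁿ⁻¹ = 2 cos²θ`, and
`√(2ⁿ - 1) = cot θ`. Rescaling `β` by `cot θ` therefore turns the recurrence into
rotation by the angle `2θ`, which starts from `(sin θ, cos θ)`; after `j - 1` steps
the angle is `(2j - 1)θ`.
-/

theorem sin_cos_of_rotation_recurrence {φ ψ : ℝ} {a b : ℕ → ℝ}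
    (ha₁ : a 1 = sin ψ) (hb₁ : b 1 = cos ψ)
    (ha : ∀ k, 1 ≤ k → a (k + 1) = cos φ * a k + sin φ * b k)
    (hb : ∀ k, 1 ≤ k → b (k + 1) = -sin φ * a k + cos φ * b k) :
    ∀ j, 1 ≤ j → a j = sin (ψ + ((j : ℝ) - 1) * φ) ∧ b j = cos (ψ + ((j : ℝ) - 1) * φ) := by
  intro j hj
  induction j, hj using Nat.le_induction with
  | base => simpa using ⟨ha₁, hb₁⟩
  | succ k hk ih =>
    have hangle : ψ + (((k + 1 : ℕ) : ℝ) - 1) * φ = (ψ + ((k : ℝ) - 1) * φ) + φ := by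
      push_cast; ring
    rw [ha k hk, hb k hk, ih.1, ih.2, hangle, sin_add _ φ, cos_add _ φ]
    constructor <;> ring

section GroverAngle

variable {n : ℕ} {θ : ℝ}

theorem one_div_two_pow_pred_eq (hn : n ≠ 0) (hsin : sin θ ^ 2 = 1 / 2 ^ n) :
    1 / (2 : ℝ) ^ (n - 1) = 2 * sin θ ^ 2 := by
  rw [hsin, ← pow_sub_one_mul hn]
  field_simp

theorem two_pow_pred_sub_one_div_eq_cos_two_mul (hn : n ≠ 0) (hsin : sin θ ^ 2 = 1 / 2 ^ n) :
    ((2 : ℝ) ^ (n - 1) - 1) / 2 ^ (n - 1) = cos (2 * θ) := by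
  rw [sub_div, div_self (by positivity), one_div_two_pow_pred_eq hn hsin, cos_two_mul', cos_sq']
  ring

theorem two_pow_sub_one_div_two_pow_pred_eq (hn : n ≠ 0) (hsin : sin θ ^ 2 = 1 / 2 ^ n) :
    ((2 : ℝ) ^ n - 1) / 2 ^ (n - 1) = 2 * cos θ ^ 2 := by
  rw [sub_div, one_div_two_pow_pred_eq hn hsin, ← pow_sub_one_mul hn,
    mul_div_cancel_left₀ _ (by positivity), cos_sq']
  ring

theorem sqrt_two_pow_eq (hs : 0 < sin θ) (hsin : sin θ ^ 2 = 1 / 2 ^ n) :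
    √(2 ^ n) = 1 / sin θ := by
  rw [← one_div_one_div ((2 : ℝ) ^ n), ← hsin, ← one_div_pow, sqrt_sq (by positivity)]

theorem sqrt_two_pow_sub_one_eq (hs : 0 < sin θ) (hc : 0 ≤ cos θ)
    (hsin : sin θ ^ 2 = 1 / 2 ^ n) :
    √(2 ^ n - 1) = cos θ / sin θ := by
  have hpow : (2 : ℝ) ^ n - 1 = (cos θ / sin θ) ^ 2 := by
    rw [div_pow, cos_sq', hsin]
    field_simp
  rw [hpow, sqrt_sq (div_nonneg hc hs.le)]

end GroverAngle

theorem grover_amplitudes_closed_form_general (n : ℕ)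
    (θ : ℝ) (hθ₀ : 0 < θ) (hθ₁ : θ < π / 2)
    (hsin : Real.sin θ ^ 2 = 1 / 2 ^ n)
    (α β : ℕ → ℝ)
    (hα1 : α 1 = 1 / Real.sqrt (2 ^ n)) (hβ1 : β 1 = 1 / Real.sqrt (2 ^ n))
    (hαrec : ∀ k, 1 ≤ k →
      α (k + 1) = (((2 : ℝ) ^ (n - 1) - 1) / 2 ^ (n - 1)) * α k +
        (((2 : ℝ) ^ n - 1) / 2 ^ (n - 1)) * β k)
    (hβrec : ∀ k, 1 ≤ k →
      β (k + 1) = -(1 / (2 : ℝ) ^ (n - 1)) * α k +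
        (((2 : ℝ) ^ (n - 1) - 1) / 2 ^ (n - 1)) * β k) :
    ∀ j, 1 ≤ j →
      α j = Real.sin ((2 * (j : ℝ) - 1) * θ) ∧
      β j = (1 / Real.sqrt (2 ^ n - 1)) * Real.cos ((2 * (j : ℝ) - 1) * θ) := by
  have hs : 0 < sin θ := sin_pos_of_pos_of_lt_pi hθ₀ (by linarith [pi_pos])
  have hc : 0 < cos θ := cos_pos_of_mem_Ioo ⟨by linarith [pi_pos], hθ₁⟩
  have hn : n ≠ 0 := by
    rintro rfl
    nlinarith [sin_sq_add_cos_sq θ, show sin θ ^ 2 = 1 by simpa using hsin]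
  simp only [two_pow_pred_sub_one_div_eq_cos_two_mul hn hsin,
    two_pow_sub_one_div_two_pow_pred_eq hn hsin, one_div_two_pow_pred_eq hn hsin] at hαrec hβrec
  rw [sqrt_two_pow_eq hs hsin, one_div_one_div] at hα1 hβ1
  rw [sqrt_two_pow_sub_one_eq hs hc.le hsin]
  have hrot := sin_cos_of_rotation_recurrence (φ := 2 * θ) (ψ := θ) (a := α)
    (b := fun k ↦ cos θ / sin θ * β k) hα1 (by simp only [hβ1]; field_simp)
    (fun k hk ↦ by rw [hαrec k hk, sin_two_mul]; field_simp)
    (fun k hk ↦ by rw [hβrec k hk, sin_two_mul]; field_simp)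
  intro j hj
  obtain ⟨hαj, hβj⟩ := hrot j hj
  have hangle : θ + ((j : ℝ) - 1) * (2 * θ) = (2 * j - 1) * θ := by ring
  rw [hangle] at hαj hβj
  refine ⟨hαj, ?_⟩
  rw [← hβj]
  field_simp

/-- Closed form for the amplitudes in Grover's algorithm with a unique
solution among `2ⁿ` items: with `sin²θ = 1/2ⁿ`, the recursively defined
amplitude sequences satisfy `αⱼ = sin((2j-1)θ)` and
`βⱼ = (1/√(2ⁿ-1))·cos((2j-1)θ)` for all `j ≥ 1`. -/
theorem grover_amplitudes_closed_form (n : ℕ) (hn : 2 ≤ n)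
    (θ : ℝ) (hθ₀ : 0 < θ) (hθ₁ : θ < π / 2)
    (hsin : Real.sin θ ^ 2 = 1 / 2 ^ n)
    (α β : ℕ → ℝ)
    (hα1 : α 1 = 1 / Real.sqrt (2 ^ n)) (hβ1 : β 1 = 1 / Real.sqrt (2 ^ n))
    (hαrec : ∀ k, 1 ≤ k →
      α (k + 1) = (((2 : ℝ) ^ (n - 1) - 1) / 2 ^ (n - 1)) * α k +
        (((2 : ℝ) ^ n - 1) / 2 ^ (n - 1)) * β k)
    (hβrec : ∀ k, 1 ≤ k →
      β (k + 1) = -(1 / (2 : ℝ) ^ (n - 1)) * α k +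
        (((2 : ℝ) ^ (n - 1) - 1) / 2 ^ (n - 1)) * β k) :
    ∀ j, 1 ≤ j →
      α j = Real.sin ((2 * (j : ℝ) - 1) * θ) ∧
      β j = (1 / Real.sqrt (2 ^ n - 1)) * Real.cos ((2 * (j : ℝ) - 1) * θ) :=
  grover_amplitudes_closed_form_general n θ hθ₀ hθ₁ hsin α β hα1 hβ1 hαrec hβrec
end

section
/- Let θ ∈ (0, π/2) with sin(2θ) ≠ 0 and let m be a positive integer. If j is chosen uniformly from {1,...,m}, then the average of sin²((2j-1)θ) over j ∈ {1,...,m} equals 1/2 - sin(4mθ)/(4m·sin(2θ)). -/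
open Real

/-! Summing `sin²x = (1 - cos 2x)/2`, the average reduces to a sum of cosines at the odd multiples
of `2θ`, which telescopes after multiplication by `2 sin 2θ`. -/

theorem sum_cos_odd_mul_mul_two_sin (φ : ℝ) (m : ℕ) :
    (∑ j ∈ Finset.Icc 1 m, cos ((2 * (j : ℝ) - 1) * φ)) * (2 * sin φ) =
      sin (2 * (m : ℝ) * φ) := by
  induction m with
  | zero => simp
  | succ n ih =>
    rw [Finset.sum_Icc_succ_top (by omega), add_mul, ih]
    push_cast
    have h_even : 2 * ((n : ℝ) + 1) * φ = 2 * n * φ + φ + φ := by ring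
    have h_odd : (2 * ((n : ℝ) + 1) - 1) * φ = 2 * n * φ + φ := by ring
    rw [h_even, h_odd, sin_add, sin_add, cos_add]
    linear_combination (-sin (2 * (n : ℝ) * φ)) * sin_sq_add_cos_sq φ

theorem sum_sin_sq_odd_mul (θ : ℝ) (m : ℕ) :
    ∑ j ∈ Finset.Icc 1 m, sin ((2 * (j : ℝ) - 1) * θ) ^ 2 =
      m / 2 - (∑ j ∈ Finset.Icc 1 m, cos ((2 * (j : ℝ) - 1) * (2 * θ))) / 2 := by
  have h_term (j : ℕ) : sin ((2 * (j : ℝ) - 1) * θ) ^ 2 =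
      1 / 2 - cos ((2 * (j : ℝ) - 1) * (2 * θ)) / 2 := by
    rw [sin_sq_eq_half_sub]
    ring_nf
  rw [Finset.sum_congr rfl fun j _ => h_term j, Finset.sum_sub_distrib, Finset.sum_const,
    Nat.card_Icc, ← Finset.sum_div, Nat.add_sub_cancel, nsmul_eq_mul]
  ring

theorem grover_average_success_general (θ : ℝ)
    (hs : Real.sin (2 * θ) ≠ 0) (m : ℕ) (hm : 0 < m) :
    (1 / (m : ℝ)) * ∑ j ∈ Finset.Icc 1 m, Real.sin ((2 * (j : ℝ) - 1) * θ) ^ 2 =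
      1 / 2 - Real.sin (4 * (m : ℝ) * θ) / (4 * (m : ℝ) * Real.sin (2 * θ)) := by
  have hm' : (m : ℝ) ≠ 0 := by positivity
  have h_cos_sum : ∑ j ∈ Finset.Icc 1 m, cos ((2 * (j : ℝ) - 1) * (2 * θ)) =
      sin (4 * (m : ℝ) * θ) / (2 * sin (2 * θ)) := by
    rw [eq_div_iff (mul_ne_zero two_ne_zero hs), sum_cos_odd_mul_mul_two_sin]
    ring_nf
  rw [sum_sin_sq_odd_mul, h_cos_sum]
  field_simp
  ring

/-- Average success probability in Grover's search with an unknown number of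
solutions: for `θ ∈ (0, π/2)` with `sin(2θ) ≠ 0` and `j` uniform on
`{1,…,m}`, the average of `sin²((2j-1)θ)` equals
`1/2 - sin(4mθ)/(4m·sin(2θ))`. -/
theorem grover_average_success (θ : ℝ) (hθ₀ : 0 < θ) (hθ₁ : θ < π / 2)
    (hs : Real.sin (2 * θ) ≠ 0) (m : ℕ) (hm : 0 < m) :
    (1 / (m : ℝ)) * ∑ j ∈ Finset.Icc 1 m, Real.sin ((2 * (j : ℝ) - 1) * θ) ^ 2 =
      1 / 2 - Real.sin (4 * (m : ℝ) * θ) / (4 * (m : ℝ) * Real.sin (2 * θ)) :=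
  grover_average_success_general θ hs m hm
end

section
/- For a positive integer p and real ω, with l₁ = ⌊2^p ω⌋ and Δ = ω - l₁/2^p, if Δ ∈ (0, 1/2^p) then sin²(2^p π Δ)/(2^{2p} sin²(πΔ)) + sin²(2^p π(1/2^p - Δ))/(2^{2p} sin²(π(1/2^p - Δ))) > 8/π². -/
open Real

/-!
With `t = 2^p Δ ∈ (0, 1)` the two numerators are both `sin² (π t)`, and `sin x < x` turns the
denominators into `(π t)²` and `(π (1 - t))²`. It remains to show
`sin² (π t) (1 / t² + 1 / (1 - t)²) ≥ 8`, with equality at `t = 1/2`: near the ends of `[0, 1]`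
this follows from `sin x ≥ x - x³/6`, in the middle from `cos x ≥ 1 - x²/2` around `t = 1/2`,
where the comparison reduces to `π² < 12`.
-/

lemma div_sq_lt_div_sq_mul_sin_sq {a N x : ℝ} (ha : 0 < a) (hN : N ≠ 0) (hx : sin x ≠ 0) :
    a / (N * x) ^ 2 < a / (N ^ 2 * sin x ^ 2) := by
  have hx0 : x ≠ 0 := by rintro rfl; simp at hx
  rw [mul_pow]
  exact div_lt_div_of_pos_left ha (by positivity)
    (mul_lt_mul_of_pos_left (sin_sq_lt_sq hx0) (by positivity))

lemma eight_mul_sq_le_sin_pi_mul_sq {t : ℝ} (ht0 : 0 ≤ t) (ht : t ≤ 1 / 5) :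
    8 * t ^ 2 ≤ sin (π * t) ^ 2 := by
  have hπ₁ := pi_gt_d2
  have hπ₂ := pi_lt_d2
  have hcoef : 2.9 ≤ π - π ^ 3 * t ^ 2 / 6 := by
    have : t ^ 2 ≤ 1 / 25 := by nlinarith
    have : π ^ 3 < 31.3 := by
      nlinarith [pow_lt_pow_left₀ hπ₂ pi_pos.le (by norm_num : 3 ≠ 0)]
    nlinarith [pow_pos pi_pos 3]
  have hsin : 2.9 * t ≤ sin (π * t) :=
    calc 2.9 * t ≤ (π - π ^ 3 * t ^ 2 / 6) * t := by gcongr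
      _ = π * t - (π * t) ^ 3 / 6 := by ring
      _ ≤ sin (π * t) := sin_ge_sub_cube (by positivity)
  nlinarith [pow_le_pow_left₀ (by positivity) hsin 2]

lemma sq_one_sub_four_mul_sq_le_cos_pi_mul_sq {u : ℝ} (hu : |u| ≤ 3 / 10) :
    (1 - 4 * u ^ 2) ^ 2 ≤ cos (π * u) ^ 2 * (1 + 4 * u ^ 2) := by
  have hu2 : u ^ 2 ≤ 9 / 100 := by nlinarith [sq_abs u, abs_nonneg u]
  have hπ : π ^ 2 < 10 := by nlinarith [pi_lt_d2, pi_pos]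
  have hcos : 1 - 5 * u ^ 2 ≤ cos (π * u) :=
    calc 1 - 5 * u ^ 2 ≤ 1 - (π * u) ^ 2 / 2 := by nlinarith [sq_nonneg u]
      _ ≤ cos (π * u) := one_sub_sq_div_two_le_cos
  have hcos_sq := pow_le_pow_left₀ (by linarith) hcos 2
  -- `(1 - 5v)² (1 + 4v) - (1 - 4v)² = v (100 v² - 31 v + 2)` is nonnegative for `0 ≤ v ≤ 0.09`
  have hpoly : (1 - 4 * u ^ 2) ^ 2 ≤ (1 - 5 * u ^ 2) ^ 2 * (1 + 4 * u ^ 2) := by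
    nlinarith [mul_nonneg (sq_nonneg u) (mul_nonneg (by linarith : (0 : ℝ) ≤ 9 / 100 - u ^ 2)
      (by linarith : (0 : ℝ) ≤ 1 / 5 - u ^ 2))]
  nlinarith [mul_le_mul_of_nonneg_right hcos_sq (by positivity : (0 : ℝ) ≤ 1 + 4 * u ^ 2)]

lemma eight_mul_sq_le_sin_pi_mul_sq_mul {t : ℝ} (ht0 : 0 ≤ t) (ht1 : t ≤ 1) :
    8 * (t * (1 - t)) ^ 2 ≤ sin (π * t) ^ 2 * (t ^ 2 + (1 - t) ^ 2) := by
  have hsymm : sin (π * (1 - t)) = sin (π * t) := by rw [mul_one_sub, sin_pi_sub]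
  rcases le_or_gt t (1 / 5) with hleft | hmid
  · have := eight_mul_sq_le_sin_pi_mul_sq ht0 hleft
    nlinarith [mul_le_mul_of_nonneg_right this (sq_nonneg (1 - t)), sq_nonneg t,
      sq_nonneg (sin (π * t) * t)]
  rcases le_or_gt (4 / 5) t with hright | hmid'
  · have := eight_mul_sq_le_sin_pi_mul_sq (t := 1 - t) (by linarith) (by linarith)
    rw [hsymm] at this
    nlinarith [mul_le_mul_of_nonneg_right this (sq_nonneg t), sq_nonneg (1 - t),
      sq_nonneg (sin (π * t) * (1 - t))]
  · have := sq_one_sub_four_mul_sq_le_cos_pi_mul_sq (u := 1 / 2 - t)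
      (abs_le.2 ⟨by linarith, by linarith⟩)
    rw [mul_sub, show π * (1 / 2) = π / 2 by ring, cos_pi_div_two_sub] at this
    nlinarith

lemma eight_div_pi_sq_le_sin_sq_div_add {t : ℝ} (ht0 : 0 < t) (ht1 : t < 1) :
    8 / π ^ 2 ≤ sin (π * t) ^ 2 / (π * t) ^ 2 + sin (π * t) ^ 2 / (π * (1 - t)) ^ 2 := by
  have h1t : 0 < 1 - t := by linarith
  have hsum : sin (π * t) ^ 2 / (π * t) ^ 2 + sin (π * t) ^ 2 / (π * (1 - t)) ^ 2
      = sin (π * t) ^ 2 * (t ^ 2 + (1 - t) ^ 2) / (π ^ 2 * (t * (1 - t)) ^ 2) := by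
    field_simp
    ring
  rw [hsum, div_le_div_iff₀ (by positivity) (by positivity)]
  nlinarith [eight_mul_sq_le_sin_pi_mul_sq_mul ht0.le ht1.le, sq_nonneg π]

theorem quantum_counting_bound_general (p : ℕ) (Δ : ℝ)
    (h₀ : 0 < Δ) (h₁ : Δ < 1 / 2 ^ p) :
    Real.sin ((2 : ℝ) ^ p * π * Δ) ^ 2 / (2 ^ (2 * p) * Real.sin (π * Δ) ^ 2) +
      Real.sin ((2 : ℝ) ^ p * π * (1 / 2 ^ p - Δ)) ^ 2 /
        (2 ^ (2 * p) * Real.sin (π * (1 / 2 ^ p - Δ)) ^ 2) > 8 / π ^ 2 := by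
  set N : ℝ := 2 ^ p
  have hN : 0 < N := by positivity
  have hN_inv : 1 / N ≤ 1 := by rw [div_le_one hN]; exact one_le_pow₀ one_le_two
  set t := N * Δ
  have ht0 : 0 < t := by positivity
  have ht1 : t < 1 := by rwa [lt_div_iff₀' hN] at h₁
  have hsin_ne (x : ℝ) (hx0 : 0 < x) (hx1 : x < 1) : sin (π * x) ≠ 0 :=
    (sin_pos_of_pos_of_lt_pi (by positivity) (by nlinarith [pi_pos])).ne'
  have hs : 0 < sin (π * t) ^ 2 := by have := hsin_ne t ht0 ht1; positivity
  have h_left := div_sq_lt_div_sq_mul_sin_sq hs hN.ne' (hsin_ne Δ h₀ (by linarith))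
  have h_right := div_sq_lt_div_sq_mul_sin_sq hs hN.ne'
    (hsin_ne (1 / N - Δ) (by linarith) (by linarith))
  have hNδ : N * (1 / N - Δ) = 1 - t := by rw [mul_sub, mul_one_div_cancel hN.ne']
  rw [show N * (π * Δ) = π * t by ring] at h_left
  rw [show N * (π * (1 / N - Δ)) = π * (1 - t) by rw [← hNδ]; ring] at h_right
  rw [pow_mul', show N * π * Δ = π * t by ring,
    show N * π * (1 / N - Δ) = π - π * t by rw [← mul_one_sub, ← hNδ]; ring, sin_pi_sub]
  exact (eight_div_pi_sq_le_sin_sq_div_add ht0 ht1).trans_lt (add_lt_add h_left h_right)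

/-- Probability bound in quantum counting / phase estimation: for
`l₁ = ⌊2^p ω⌋` and `Δ = ω - l₁/2^p` with `Δ ∈ (0, 1/2^p)`, the probability of
measuring one of the two integers closest to `2^p ω` exceeds `8/π²`. -/
theorem quantum_counting_bound (p : ℕ) (hp : 0 < p) (ω : ℝ) (l₁ : ℤ)
    (hl : l₁ = ⌊(2 : ℝ) ^ p * ω⌋) (Δ : ℝ) (hΔ : Δ = ω - (l₁ : ℝ) / 2 ^ p)
    (h₀ : 0 < Δ) (h₁ : Δ < 1 / 2 ^ p) :
    Real.sin ((2 : ℝ) ^ p * π * Δ) ^ 2 / (2 ^ (2 * p) * Real.sin (π * Δ) ^ 2) +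
      Real.sin ((2 : ℝ) ^ p * π * (1 / 2 ^ p - Δ)) ^ 2 /
        (2 ^ (2 * p) * Real.sin (π * (1 / 2 ^ p - Δ)) ^ 2) > 8 / π ^ 2 :=
  quantum_counting_bound_general p Δ h₀ h₁
end
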